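/- Let k ≥ 2 be an integer and i an integer with 0 ≤ i ≤ 2k, and let F(z) = φ^{4k−2i}(z) φ^{2i}(3z). Then F vanishes at the cusps 1/2 and 1/6: the limit as Im(z) → ∞ of (2z+1)^{−2k} F(z/(2z+1)) equals 0, and the limit as Im(z) → ∞ of (6z+1)^{−2k} F(z/(6z+1)) equals 0. -/

import Mathlib

open Complex UpperHalfPlane Filter

/-- Ramanujan's theta function `φ(z) = ∑_{n ∈ ℤ} q^{n²}`. -/
noncomputable def phi (z : ℂ) : ℂ :=
  ∑' n : ℤ, Complex.exp (2 * Real.pi * Complex.I * (n : ℂ) ^ 2 * z)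

/-!
Write `φ(u) = θ(2u)` with `θ(τ) = ∑ exp(πin²τ)`. Up to the period `2` of `θ` and, for `φ(z/(6z + 1))`,
one inversion `τ ↦ -1/τ`, each of the four values of `φ` involved is `θ(1 - 1/w)` with `Im w` a positive
multiple of `Im z`. The functional equation turns `θ(1 - 1/w)` into `(-iw)^{1/2} e^{πiw/4} θ₂(w/2, w)`,
and `θ₂(w/2, w) = ∑ e^{πi(n² + n)w}` stays bounded because `n² + n ≥ 0`. Hence every factor `φ` is
`O(|cz + 1|^{1/2} e^{-π Im z / 6})`; the `4k` factors absorb `(cz + 1)^{-2k}` exactly, and what is left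
decays exponentially.
-/

open Real

lemma ne_zero_of_im_pos {w : ℂ} (hw : 0 < w.im) : w ≠ 0 := ne_of_apply_ne Complex.im hw.ne'

lemma phi_eq_jacobiTheta (u : ℂ) : phi u = jacobiTheta (2 * u) :=
  tsum_congr fun n => by ring_nf

lemma jacobiTheta₂_add_half_left (z τ : ℂ) : jacobiTheta₂ (z + 1 / 2) τ = jacobiTheta₂ z (τ + 1) := by
  refine tsum_congr fun n => ?_
  obtain ⟨m, hm⟩ : Even (n ^ 2 - n) := by
    simpa [sq, ← mul_sub_one] using Int.even_mul_pred_self n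
  rw [jacobiTheta₂_term, jacobiTheta₂_term, Complex.exp_eq_exp_iff_exists_int]
  refine ⟨-m, ?_⟩
  have hm' : (n : ℂ) ^ 2 - n = m + m := by exact_mod_cast hm
  push_cast
  linear_combination -(π : ℂ) * Complex.I * hm'

lemma norm_cpow_one_half (w : ℂ) : ‖w ^ (1 / 2 : ℂ)‖ = √‖w‖ := by
  rw [Real.sqrt_eq_rpow, ← Complex.norm_cpow_real]
  norm_num

lemma norm_jacobiTheta_eq_div_sqrt (τ : ℂ) :
    ‖jacobiTheta τ‖ = ‖jacobiTheta (-1 / τ)‖ / √‖τ‖ := by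
  rw [jacobiTheta_eq_jacobiTheta₂, jacobiTheta_eq_jacobiTheta₂, jacobiTheta₂_functional_equation]
  simp only [ne_eq, OfNat.ofNat_ne_zero, not_false_eq_true, zero_pow, mul_zero, zero_div,
    Complex.exp_zero, mul_one, norm_mul, norm_div, norm_one, norm_cpow_one_half, norm_neg,
    Complex.norm_I, one_mul]
  ring

lemma jacobiTheta_one_sub_inv {w : ℂ} (hw : w ≠ 0) :
    jacobiTheta (1 - 1 / w) =
      (-Complex.I * w) ^ (1 / 2 : ℂ) * cexp (π * Complex.I * w / 4) * jacobiTheta₂ (w / 2) w := by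
  have hsqrt : (-Complex.I * w) ^ (1 / 2 : ℂ) ≠ 0 := by simp [cpow_eq_zero_iff, hw]
  have hexp : cexp (π * Complex.I * w / 4) * cexp (-π * Complex.I * (w / 2) ^ 2 / w) = 1 := by
    rw [← Complex.exp_add, ← Complex.exp_zero]
    congr 1
    field_simp
    ring
  rw [jacobiTheta₂_functional_equation (w / 2) w, div_div_cancel_left' hw,
    show (2⁻¹ : ℂ) = 0 + 1 / 2 by norm_num, jacobiTheta₂_add_half_left, ← jacobiTheta_eq_jacobiTheta₂,
    show -1 / w + 1 = 1 - 1 / w by ring]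
  calc _ = ((-Complex.I * w) ^ (1 / 2 : ℂ) * (1 / (-Complex.I * w) ^ (1 / 2 : ℂ))) *
        (cexp (π * Complex.I * w / 4) * cexp (-π * Complex.I * (w / 2) ^ 2 / w)) *
        jacobiTheta (1 - 1 / w) := by rw [mul_one_div_cancel hsqrt, hexp, one_mul, one_mul]
    _ = _ := by ring

lemma norm_jacobiTheta₂_half_self_le {w w₀ : ℂ} (h₀ : 0 < w₀.im) (h : w₀.im ≤ w.im) :
    ‖jacobiTheta₂ (w / 2) w‖ ≤ ∑' n : ℤ, ‖jacobiTheta₂_term n (w₀ / 2) w₀‖ := by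
  refine tsum_of_norm_bounded ((summable_jacobiTheta₂_term_iff _ _).2 h₀).norm.hasSum
    fun n => ?_
  have hn : (0 : ℝ) ≤ n ^ 2 + n := by
    have : (0 : ℤ) ≤ n ^ 2 + n := by nlinarith
    exact_mod_cast this
  rw [norm_jacobiTheta₂_term, norm_jacobiTheta₂_term, Real.exp_le_exp]
  simp only [div_ofNat_im]
  nlinarith [Real.pi_pos, mul_le_mul_of_nonneg_left h (mul_nonneg Real.pi_pos.le hn)]

noncomputable def halfThetaBound : ℝ := ∑' n : ℤ, ‖jacobiTheta₂_term n (Complex.I / 2) Complex.I‖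

lemma halfThetaBound_nonneg : 0 ≤ halfThetaBound := tsum_nonneg fun _ => norm_nonneg _

lemma norm_jacobiTheta_one_sub_inv_le {w : ℂ} (hw : 1 ≤ w.im) :
    ‖jacobiTheta (1 - 1 / w)‖ ≤ √‖w‖ * (halfThetaBound * rexp (-(π / 4) * w.im)) := by
  have hre : (π * Complex.I * w / 4).re = -(π / 4) * w.im := by
    simp [Complex.mul_re, neg_div, div_mul_eq_mul_div]
  rw [jacobiTheta_one_sub_inv (ne_zero_of_im_pos (by linarith)), norm_mul, norm_mul, norm_cpow_one_half, Complex.norm_exp, hre,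
    norm_mul, norm_neg, Complex.norm_I, one_mul, mul_assoc, mul_comm halfThetaBound]
  gcongr
  exact norm_jacobiTheta₂_half_self_le (by simp) (by simpa using hw)

lemma norm_phi_div_two_mul_add_one_le {z : ℂ} (hz : 1 / 2 ≤ z.im) :
    ‖phi (z / (2 * z + 1))‖ ≤ √‖2 * z + 1‖ * (halfThetaBound * rexp (-(π / 2) * z.im)) := by
  have him : (2 * z + 1).im = 2 * z.im := by simp
  have hne : 2 * z + 1 ≠ 0 := ne_zero_of_im_pos (by rw [him]; linarith)
  rw [phi_eq_jacobiTheta, show 2 * (z / (2 * z + 1)) = 1 - 1 / (2 * z + 1) by field_simp; ring]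
  convert norm_jacobiTheta_one_sub_inv_le (w := 2 * z + 1) (by linarith) using 4
  rw [him]; ring

lemma norm_phi_three_mul_div_two_mul_add_one_le {z : ℂ} (hz : 3 / 2 ≤ z.im) :
    ‖phi (3 * (z / (2 * z + 1)))‖ ≤ √‖2 * z + 1‖ * (halfThetaBound * rexp (-(π / 6) * z.im)) := by
  have him : ((2 * z + 1) / 3).im = 2 * z.im / 3 := by simp
  have hne : 2 * z + 1 ≠ 0 := ne_zero_of_im_pos (by simp [show 0 < z.im by linarith])
  rw [phi_eq_jacobiTheta, show 2 * (3 * (z / (2 * z + 1))) = 2 + (1 - 1 / ((2 * z + 1) / 3)) by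
    field_simp; ring, jacobiTheta_two_add]
  refine (norm_jacobiTheta_one_sub_inv_le (by linarith)).trans ?_
  rw [him, show -(π / 4) * (2 * z.im / 3) = -(π / 6) * z.im by ring]
  have hB := halfThetaBound_nonneg
  gcongr
  rw [norm_div, RCLike.norm_ofNat]
  exact div_le_self (norm_nonneg _) (by norm_num)

lemma norm_phi_div_six_mul_add_one_le {z : ℂ} (hz : 1 / 2 ≤ z.im) :
    ‖phi (z / (6 * z + 1))‖ ≤ √‖6 * z + 1‖ * (halfThetaBound * rexp (-(π / 2) * z.im)) := by
  have hz0 : z ≠ 0 := ne_zero_of_im_pos (by linarith)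
  have him : (6 * z + 1).im = 6 * z.im := by simp
  have hne : 6 * z + 1 ≠ 0 := ne_zero_of_im_pos (by rw [him]; linarith)
  rw [phi_eq_jacobiTheta, norm_jacobiTheta_eq_div_sqrt, ← jacobiTheta_two_add,
    ← jacobiTheta_two_add,
    show 2 + (2 + -1 / (2 * (z / (6 * z + 1)))) = 1 - 1 / (2 * z) by field_simp; ring,
    div_le_iff₀ (Real.sqrt_pos.2 (norm_pos_iff.2 (by simp [hz0, hne])))]
  have h2z : (2 * z).im = 2 * z.im := by simp
  have hsqrt : √‖6 * z + 1‖ ≠ 0 := by positivity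
  refine (norm_jacobiTheta_one_sub_inv_le (by linarith)).trans_eq ?_
  rw [← mul_div_assoc, norm_div, Real.sqrt_div' _ (norm_nonneg _), h2z,
    show -(π / 4) * (2 * z.im) = -(π / 2) * z.im by ring, mul_comm √‖6 * z + 1‖, mul_assoc,
    mul_div_cancel₀ _ hsqrt, mul_comm]

lemma norm_phi_three_mul_div_six_mul_add_one_le {z : ℂ} (hz : 1 / 6 ≤ z.im) :
    ‖phi (3 * (z / (6 * z + 1)))‖ ≤
      √‖6 * z + 1‖ * (halfThetaBound * rexp (-(3 * π / 2) * z.im)) := by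
  have h3z : (3 * z).im = 3 * z.im := by simp
  convert norm_phi_div_two_mul_add_one_le (z := 3 * z) (by rw [h3z]; linarith) using 4
  · ring
  · ring
  · rw [h3z]; ring

lemma tendsto_mul_exp_neg_mul_im_atImInfty (B : ℝ) {c : ℝ} (hc : 0 < c) :
    Tendsto (fun z : ℍ => B * rexp (-c * z.im)) atImInfty (nhds 0) := by
  have him : Tendsto UpperHalfPlane.im atImInfty atTop := tendsto_comap
  simpa [Function.comp_def, neg_mul] using
    (Real.tendsto_exp_neg_atTop_nhds_zero.comp (him.const_mul_atTop hc)).const_mul B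

lemma tendsto_inv_pow_mul_pow_mul_pow_of_norm_le {α : Type*} {l : Filter α} {A f g : α → ℂ}
    {M N : α → ℝ} {a b m : ℕ} (hab : a + b = 2 * m) (hm : m ≠ 0)
    (hM : Tendsto M l (nhds 0)) (hN : Tendsto N l (nhds 0)) (hA : ∀ᶠ x in l, A x ≠ 0)
    (hf : ∀ᶠ x in l, ‖f x‖ ≤ √‖A x‖ * M x) (hg : ∀ᶠ x in l, ‖g x‖ ≤ √‖A x‖ * N x) :
    Tendsto (fun x => (A x ^ m)⁻¹ * (f x ^ a * g x ^ b)) l (nhds 0) := by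
  have hlim : Tendsto (fun x => M x ^ a * N x ^ b) l (nhds 0) := by
    simpa [← pow_add, hab, hm] using (hM.pow a).mul (hN.pow b)
  refine squeeze_zero_norm' ?_ hlim
  filter_upwards [hA, hf, hg] with x hAx hfx hgx
  have hsqrt : √‖A x‖ ^ (a + b) = ‖A x‖ ^ m := by
    rw [hab, pow_mul, Real.sq_sqrt (norm_nonneg _)]
  calc ‖(A x ^ m)⁻¹ * (f x ^ a * g x ^ b)‖ = (‖A x‖ ^ m)⁻¹ * (‖f x‖ ^ a * ‖g x‖ ^ b) := by
        simp only [norm_mul, norm_inv, norm_pow]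
    _ ≤ (‖A x‖ ^ m)⁻¹ * ((√‖A x‖ * M x) ^ a * (√‖A x‖ * N x) ^ b) := by
        have hfx₀ := (norm_nonneg _).trans hfx
        gcongr
    _ = M x ^ a * N x ^ b := by
        rw [mul_pow, mul_pow, mul_mul_mul_comm, ← pow_add, hsqrt,
          inv_mul_cancel_left₀ (by positivity)]

/-- `F(z) = φ^{4k−2i}(z) φ^{2i}(3z)` vanishes at the cusps `1/2` and `1/6`. -/
theorem phi_pow_vanishes_at_cusps (k i : ℕ) (hk : 2 ≤ k) (hi : i ≤ 2 * k) :
    Filter.Tendsto (fun z : UpperHalfPlane =>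
        (((2 : ℂ) * (z : ℂ) + 1) ^ (2 * k))⁻¹ *
          (phi ((z : ℂ) / ((2 : ℂ) * (z : ℂ) + 1)) ^ (4 * k - 2 * i) *
            phi (3 * ((z : ℂ) / ((2 : ℂ) * (z : ℂ) + 1))) ^ (2 * i)))
      UpperHalfPlane.atImInfty (nhds 0) ∧
    Filter.Tendsto (fun z : UpperHalfPlane =>
        (((6 : ℂ) * (z : ℂ) + 1) ^ (2 * k))⁻¹ *
          (phi ((z : ℂ) / ((6 : ℂ) * (z : ℂ) + 1)) ^ (4 * k - 2 * i) *
            phi (3 * ((z : ℂ) / ((6 : ℂ) * (z : ℂ) + 1))) ^ (2 * i)))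
      UpperHalfPlane.atImInfty (nhds 0) := by
  have hab : 4 * k - 2 * i + 2 * i = 2 * (2 * k) := by omega
  have hm : 2 * k ≠ 0 := by omega
  have hlarge (c : ℝ) : ∀ᶠ z : ℍ in atImInfty, c ≤ z.im := tendsto_comap.eventually_ge_atTop c
  have hdecay (c : ℝ) (hc : 0 < c) := tendsto_mul_exp_neg_mul_im_atImInfty halfThetaBound hc
  constructor
  · refine tendsto_inv_pow_mul_pow_mul_pow_of_norm_le hab hm (hdecay (π / 2) (by positivity))
      (hdecay (π / 6) (by positivity)) (.of_forall fun z => ne_zero_of_im_pos (by simp [z.im_pos])) ?_ ?_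
    · filter_upwards [hlarge (1 / 2)] with z hz using norm_phi_div_two_mul_add_one_le hz
    · filter_upwards [hlarge (3 / 2)] with z hz using norm_phi_three_mul_div_two_mul_add_one_le hz
  · refine tendsto_inv_pow_mul_pow_mul_pow_of_norm_le hab hm (hdecay (π / 2) (by positivity))
      (hdecay (3 * π / 2) (by positivity)) (.of_forall fun z => ne_zero_of_im_pos (by simp [z.im_pos])) ?_ ?_
    · filter_upwards [hlarge (1 / 2)] with z hz using norm_phi_div_six_mul_add_one_le hz
    · filter_upwards [hlarge (1 / 6)] with z hz using norm_phi_three_mul_div_six_mul_add_one_le hz
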